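/- arXiv:0901.1154 — 8 statements merged into one kernel-verified Lean document; each statement's English description precedes it below -/
import Mathlib

section
/- Let R → S be a finite ring homomorphism such that Hom_R(S, R) is isomorphic to S as an S-module, and let M be a finitely generated S-module. Then the natural map Hom_S(M, S) × Hom_R(S, R) → Hom_R(M, R) given by composition (φ, α) ↦ α ∘ φ is surjective. -/
/-!
Write `α_s := α(s · -)`, so that `s ↦ α_s` is a bijection `S ≃ Hom_R(S, R)`. Given an `R`-linear
`f : M → R`, each `m : M` gives the `R`-linear map `t ↦ f (t • m)`, which is `α_s` for a unique
`s =: g m`. Uniqueness makes `g` additive and `S`-linear (since `α_{t g(m)} = α_{g(t m)}`), and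
`α (g m) = α_{g m} 1 = f m`, so `f = α ∘ g`.
-/

open Function

namespace LinearMap

variable {R S M : Type*} [CommRing R] [CommRing S] [Algebra R S]
  [AddCommGroup M] [Module S M] [Module R M] [IsScalarTower R S M]
  {α : S →ₗ[R] R}

theorem eq_of_forall_apply_mul_eq (hα : Injective fun s : S => α ∘ₗ LinearMap.mul R S s)
    {s s' : S} (h : ∀ t, α (s * t) = α (s' * t)) : s = s' :=
  hα (LinearMap.ext h)

noncomputable def liftOfBijective (hα : Bijective fun s : S => α ∘ₗ LinearMap.mul R S s)
    (f : M →ₗ[R] R) (m : M) : S :=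
  (Equiv.ofBijective _ hα).symm (f ∘ₗ (toSpanSingleton S M m).restrictScalars R)

section

variable (hα : Bijective fun s : S => α ∘ₗ LinearMap.mul R S s) (f : M →ₗ[R] R)

theorem apply_liftOfBijective_mul (m : M) (t : S) :
    α (liftOfBijective hα f m * t) = f (t • m) :=
  LinearMap.congr_fun ((Equiv.ofBijective _ hα).apply_symm_apply _) t

theorem liftOfBijective_add (m m' : M) :
    liftOfBijective hα f (m + m') = liftOfBijective hα f m + liftOfBijective hα f m' :=
  eq_of_forall_apply_mul_eq hα.1 fun t => by
    rw [add_mul, map_add, apply_liftOfBijective_mul, apply_liftOfBijective_mul,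
      apply_liftOfBijective_mul, smul_add, map_add]

theorem liftOfBijective_smul (s : S) (m : M) :
    liftOfBijective hα f (s • m) = s * liftOfBijective hα f m :=
  eq_of_forall_apply_mul_eq hα.1 fun t => by
    rw [apply_liftOfBijective_mul, mul_comm s, mul_assoc, apply_liftOfBijective_mul, mul_smul,
      smul_comm]

end

theorem exists_eq_comp_restrictScalars
    (hα : Bijective fun s : S => α ∘ₗ LinearMap.mul R S s) (f : M →ₗ[R] R) :
    ∃ g : M →ₗ[S] S, f = α ∘ₗ g.restrictScalars R := by
  refine ⟨⟨⟨liftOfBijective hα f, liftOfBijective_add hα f⟩, liftOfBijective_smul hα f⟩, ?_⟩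
  ext m
  simpa using (apply_liftOfBijective_mul hα f m 1).symm

end LinearMap

theorem stmt0_general (R S : Type*) [CommRing R] [CommRing S] [Algebra R S]
    (M : Type*) [AddCommGroup M] [Module S M] [Module R M] [IsScalarTower R S M]
    (α : S →ₗ[R] R)
    (hα : Function.Bijective fun s : S => α ∘ₗ LinearMap.mul R S s) :
    ∀ f : M →ₗ[R] R, ∃ (g : M →ₗ[S] S) (β : S →ₗ[R] R),
      f = β ∘ₗ (g.restrictScalars R) := by
  intro f
  obtain ⟨g, hg⟩ := LinearMap.exists_eq_comp_restrictScalars hα f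
  exact ⟨g, α, hg⟩

/-- If `R → S` is a finite ring map with `Hom_R(S, R) ≅ S` as `S`-modules
(witnessed by a generator `α` such that `s ↦ α(s·‑)` is bijective), then every
`R`-linear map `M → R` from a finite `S`-module `M` factors as an `S`-linear map
`M → S` followed by an `R`-linear map `S → R`. -/
theorem stmt0 (R S : Type*) [CommRing R] [CommRing S] [Algebra R S]
    [Module.Finite R S]
    (M : Type*) [AddCommGroup M] [Module S M] [Module R M] [IsScalarTower R S M]
    [Module.Finite S M]
    (α : S →ₗ[R] R)
    (hα : Function.Bijective fun s : S => α ∘ₗ LinearMap.mul R S s) :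
    ∀ f : M →ₗ[R] R, ∃ (g : M →ₗ[S] S) (β : S →ₗ[R] R),
      f = β ∘ₗ (g.restrictScalars R) :=
  stmt0_general R S M α hα
end

section
/- Let R be a commutative ring of prime characteristic p, let 𝔞 be an ideal of R generated by l elements, and let m, k be nonnegative integers. Then 𝔞^(p^k · m + l·(p^k − 1)) ⊆ (𝔞^m)^[p^k], where (𝔞^m)^[p^k] denotes the ideal generated by the p^k-th powers of elements of 𝔞^m. -/
open Pointwise


/-- The Frobenius (bracket) power `I^[q]`: the ideal generated by `q`-th powers of
elements of `I`. -/
def frobPow {R : Type*} [CommRing R] (I : Ideal R) (q : ℕ) : Ideal R :=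
  Ideal.span ((fun x => x ^ q) '' (I : Set R))

lemma prod_pow_mem_pow_sum {R : Type*} [CommRing R] (a : Ideal R) {ι : Type*}
    (s : Finset ι) (g : ι → R) (c : ι → ℕ) (h : ∀ i ∈ s, g i ∈ a) :
    (∏ i ∈ s, g i ^ c i) ∈ a ^ (∑ i ∈ s, c i) := by
  classical
  induction s using Finset.induction with
  | empty => simp
  | @insert x s hx ih =>
    rw [Finset.prod_insert hx, Finset.sum_insert hx, pow_add]
    exact Ideal.mul_mem_mul (Ideal.pow_mem_pow (h _ (Finset.mem_insert_self _ _)) _)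
      (ih fun i hi => h i (Finset.mem_insert_of_mem hi))

theorem stmt1 (R : Type*) [CommRing R] (p : ℕ) (hp : p.Prime) [CharP R p]
    (l : ℕ) (a : Ideal R) (f : Fin l → R) (hgen : a = Ideal.span (Set.range f))
    (m k : ℕ) :
    a ^ (p ^ k * m + l * (p ^ k - 1)) ≤ frobPow (a ^ m) (p ^ k) := by
  classical
  set q := p ^ k with hq
  have hq0 : 0 < q := pow_pos hp.pos k
  set N := q * m + l * (q - 1) with hN
  have hfa : ∀ i, f i ∈ a := fun i => hgen ▸ Ideal.subset_span ⟨i, rfl⟩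
  conv_lhs => rw [hgen]
  rw [show (Ideal.span (Set.range f) : Ideal R) ^ N
        = Ideal.span ((Set.range f) ^ N) from Submodule.span_pow _ N, Ideal.span_le]
  rintro x hx
  rw [Set.mem_pow] at hx
  obtain ⟨g, hg⟩ := hx
  have hchoose : ∀ j : Fin N, ∃ i : Fin l, f i = (g j : R) := fun j => (g j).2
  choose idx hidx using hchoose
  have hx' : x = ∏ j : Fin N, f (idx j) := by
    rw [← hg, List.prod_ofFn]
    exact Finset.prod_congr rfl fun j _ => (hidx j).symm
  -- multiplicities
  set c : Fin l → ℕ := fun i => (Finset.univ.filter (fun j => idx j = i)).card with hc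
  have hxprod : x = ∏ i : Fin l, f i ^ c i := by
    rw [hx', ← Finset.prod_fiberwise_of_maps_to (g := idx) (fun j _ => Finset.mem_univ _)]
    refine Finset.prod_congr rfl fun i _ => ?_
    calc ∏ j ∈ Finset.univ.filter (fun j => idx j = i), f (idx j)
        = ∏ _j ∈ Finset.univ.filter (fun j => idx j = i), f i :=
          Finset.prod_congr rfl fun j hj => by rw [(Finset.mem_filter.mp hj).2]
      _ = f i ^ c i := Finset.prod_const _
  have hcsum : ∑ i : Fin l, c i = N := by
    have h := Finset.card_eq_sum_card_fiberwise (f := idx)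
      (s := (Finset.univ : Finset (Fin N))) (t := Finset.univ)
      (fun j _ => Finset.mem_univ _)
    simpa [Finset.card_univ, hc] using h.symm
  set d : Fin l → ℕ := fun i => c i / q with hd
  set r : Fin l → ℕ := fun i => c i % q with hr
  have hdr : ∀ i, c i = q * d i + r i := fun i => (Nat.div_add_mod (c i) q).symm
  -- sum of d is at least m
  have hsd : m ≤ ∑ i, d i := by
    have h1 : N ≤ q * (∑ i, d i) + l * (q - 1) := by
      calc N = ∑ i, c i := hcsum.symm
        _ = ∑ i, (q * d i + r i) := Finset.sum_congr rfl fun i _ => hdr i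
        _ = q * (∑ i, d i) + ∑ i, r i := by rw [Finset.sum_add_distrib, Finset.mul_sum]
        _ ≤ q * (∑ i, d i) + l * (q - 1) := by
            refine Nat.add_le_add_left ?_ _
            calc ∑ i, r i ≤ ∑ _i : Fin l, (q - 1) :=
              Finset.sum_le_sum fun i _ => Nat.le_sub_one_of_lt (Nat.mod_lt _ hq0)
              _ = l * (q - 1) := by simp [Finset.sum_const, Finset.card_univ, mul_comm]
    have h2 : q * m ≤ q * (∑ i, d i) := by omega
    exact Nat.le_of_mul_le_mul_left h2 hq0
  have hy : (∏ i, f i ^ d i) ∈ a ^ m :=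
    Ideal.pow_le_pow_right hsd (prod_pow_mem_pow_sum a _ f d fun i _ => hfa i)
  have hyq : (∏ i, f i ^ d i) ^ q ∈ frobPow (a ^ m) q :=
    Ideal.subset_span ⟨_, hy, rfl⟩
  have hxeq : x = (∏ i, f i ^ d i) ^ q * ∏ i, f i ^ r i := by
    rw [hxprod, ← Finset.prod_pow, ← Finset.prod_mul_distrib]
    exact Finset.prod_congr rfl fun i _ => by
      rw [← pow_mul, ← pow_add, mul_comm (d i) q, ← hdr i]
  rw [hxeq]
  exact Ideal.mul_mem_right _ _ hyq
end

section
/- Let R be a commutative ring of prime characteristic p, let 𝔞 be an ideal of R generated by l elements containing a nonzerodivisor (more precisely, 𝔞 ∩ R° ≠ ∅ where R° is the set of elements not in any minimal prime), let t > 0 be a real number and fix e > 0. Then there exists c' ∈ R° such that c' · 𝔞^⌈t(p^(ne+k) − 1)⌉ ⊆ (𝔞^⌈t(p^(ne) − 1)⌉)^[p^k] for all integers n > 0 and all 0 ≤ k < e. In fact any c' ∈ 𝔞^((l+1)p^e) ∩ R° works. -/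
/-- `R°`: the set of elements not contained in any minimal prime of `R`. -/
def Rcirc (R : Type*) [CommRing R] : Set R :=
  {x | ∀ P ∈ minimalPrimes R, x ∉ P}

/-!
If `𝔞` is generated by `l` elements, a monomial of degree `N ≥ (m + l) q` in the generators
factors as a `q`-th power of a monomial of degree `≥ m` times a leftover, so
`𝔞 ^ N ⊆ (𝔞 ^ m)^[q]`. With `M = ⌈t (p^(ne) - 1)⌉` and `N = ⌈t (p^(ne+k) - 1)⌉` one has
`M p^k ≤ N + p^k`, hence `(M + l) p^k ≤ (l + 1) p^e + N`, and multiplying by any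
`c' ∈ 𝔞 ^ ((l + 1) p^e)` lands `𝔞 ^ N` inside `(𝔞 ^ M)^[p^k]`. A power of an element of
`𝔞 ∩ R°` is such a `c'`, since minimal primes are prime.
-/

lemma pow_mem_frobPow {R : Type*} [CommRing R] {I : Ideal R} {x : R} (hx : x ∈ I) (q : ℕ) :
    x ^ q ∈ frobPow I q :=
  Ideal.subset_span ⟨x, hx, rfl⟩

lemma pow_mem_Rcirc {R : Type*} [CommRing R] {x : R} (hx : x ∈ Rcirc R) (n : ℕ) :
    x ^ n ∈ Rcirc R :=
  fun P hP hxn => hx P hP (hP.1.1.mem_of_pow_mem n hxn)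

lemma prod_pow_mem_span_range_pow {R ι : Type*} [CommRing R] (f : ι → R) (α : ι → ℕ)
    (s : Finset ι) : ∏ i ∈ s, f i ^ α i ∈ Ideal.span (Set.range f) ^ ∑ i ∈ s, α i := by
  rw [← Finset.prod_pow_eq_pow_sum]
  exact Ideal.prod_mem_prod fun i _ =>
    Ideal.pow_mem_pow (Ideal.subset_span (Set.mem_range_self i)) _

lemma le_sum_div_of_add_card_mul_le {ι : Type*} (s : Finset ι) (α : ι → ℕ) {m q : ℕ}
    (hq : 0 < q) (h : (m + s.card) * q ≤ ∑ i ∈ s, α i) : m ≤ ∑ i ∈ s, α i / q := by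
  have hsum_le : ∑ i ∈ s, α i ≤ (∑ i ∈ s, α i / q) * q + s.card * q := by
    rw [Finset.sum_mul, ← smul_eq_mul, ← Finset.sum_const, ← Finset.sum_add_distrib]
    exact Finset.sum_le_sum fun i _ => (Nat.lt_div_mul_add hq).le
  exact Nat.le_of_mul_le_mul_right (by linarith) hq

lemma prod_pow_mem_frobPow {R ι : Type*} [CommRing R] (f : ι → R) (α : ι → ℕ) (s : Finset ι)
    {m q : ℕ} (hq : 0 < q) (h : (m + s.card) * q ≤ ∑ i ∈ s, α i) :
    ∏ i ∈ s, f i ^ α i ∈ frobPow (Ideal.span (Set.range f) ^ m) q := by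
  have hsplit : ∏ i ∈ s, f i ^ α i =
      (∏ i ∈ s, f i ^ (α i / q)) ^ q * ∏ i ∈ s, f i ^ (α i % q) := by
    rw [← Finset.prod_pow, ← Finset.prod_mul_distrib]
    refine Finset.prod_congr rfl fun i _ => ?_
    rw [← pow_mul, ← pow_add, Nat.div_add_mod']
  have hquot : ∏ i ∈ s, f i ^ (α i / q) ∈ Ideal.span (Set.range f) ^ m :=
    Ideal.pow_le_pow_right (le_sum_div_of_add_card_mul_le s α hq h)
      (prod_pow_mem_span_range_pow f _ s)
  rw [hsplit]
  exact Ideal.mul_mem_right _ _ (pow_mem_frobPow hquot q)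

lemma span_range_pow_le_frobPow {R ι : Type*} [CommRing R] [Fintype ι] (f : ι → R)
    {m q N : ℕ} (hq : 0 < q) (h : (m + Fintype.card ι) * q ≤ N) :
    Ideal.span (Set.range f) ^ N ≤ frobPow (Ideal.span (Set.range f) ^ m) q := by
  intro y hy
  obtain ⟨P, hP, rfl⟩ := (Ideal.mem_span_pow_iff_exists_isHomogeneous f y).1 hy
  rw [MvPolynomial.eval_eq]
  refine Ideal.sum_mem _ fun d hd => Ideal.mul_mem_left _ _ (prod_pow_mem_frobPow f d _ hq ?_)
  rw [← hP.degree_eq_sum_deg_support hd]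
  exact le_trans (Nat.mul_le_mul_right _ (Nat.add_le_add_left (Finset.card_le_univ _) _)) h

lemma natCeil_mul_sub_one_mul_le {t P Q : ℝ} (ht : 0 ≤ t) (hP : 1 ≤ P) (hQ : 1 ≤ Q) :
    (⌈t * (P - 1)⌉₊ : ℝ) * Q ≤ ⌈t * (P * Q - 1)⌉₊ + Q :=
  calc (⌈t * (P - 1)⌉₊ : ℝ) * Q ≤ (t * (P - 1) + 1) * Q :=
        mul_le_mul_of_nonneg_right
          (Nat.ceil_lt_add_one (mul_nonneg ht (sub_nonneg.2 hP))).le (by linarith)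
    _ = t * (P * Q - 1) + Q - t * (Q - 1) := by ring
    _ ≤ ⌈t * (P * Q - 1)⌉₊ + Q := by
        linarith [Nat.le_ceil (t * (P * Q - 1)), mul_nonneg ht (sub_nonneg.2 hQ)]

lemma natCeil_add_mul_pow_le {p : ℕ} (hp : 0 < p) {t : ℝ} (ht : 0 ≤ t) (l : ℕ) {e j k : ℕ}
    (hk : k ≤ e) :
    (⌈t * ((p : ℝ) ^ j - 1)⌉₊ + l) * p ^ k ≤ (l + 1) * p ^ e + ⌈t * ((p : ℝ) ^ (j + k) - 1)⌉₊ := by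
  have hp1 : (1 : ℝ) ≤ p := by exact_mod_cast hp
  have hceil : ⌈t * ((p : ℝ) ^ j - 1)⌉₊ * p ^ k ≤ ⌈t * ((p : ℝ) ^ (j + k) - 1)⌉₊ + p ^ k := by
    have := natCeil_mul_sub_one_mul_le ht (one_le_pow₀ hp1 (n := j)) (one_le_pow₀ hp1 (n := k))
    rw [← pow_add] at this
    exact_mod_cast this
  have hpow : p ^ k ≤ p ^ e := Nat.pow_le_pow_right hp hk
  nlinarith

theorem mul_mem_frobPow_span_range_pow_natCeil {R ι : Type*} [CommRing R] [Fintype ι]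
    (f : ι → R) {p : ℕ} (hp : 0 < p) {t : ℝ} (ht : 0 ≤ t) {e j k : ℕ} (hk : k ≤ e) {c x : R}
    (hc : c ∈ Ideal.span (Set.range f) ^ ((Fintype.card ι + 1) * p ^ e))
    (hx : x ∈ Ideal.span (Set.range f) ^ ⌈t * ((p : ℝ) ^ (j + k) - 1)⌉₊) :
    c * x ∈ frobPow (Ideal.span (Set.range f) ^ ⌈t * ((p : ℝ) ^ j - 1)⌉₊) (p ^ k) := by
  have hcx := Ideal.mul_mem_mul hc hx
  rw [← pow_add] at hcx
  exact span_range_pow_le_frobPow f (pow_pos hp k) (natCeil_add_mul_pow_le hp ht _ hk) hcx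

theorem stmt2_general (R : Type*) [CommRing R]
    (p : ℕ) (hp : p.Prime)
    (l : ℕ) (a : Ideal R) (f : Fin l → R) (hgen : a = Ideal.span (Set.range f))
    (hcirc : ∃ x ∈ a, x ∈ Rcirc R)
    (t : ℝ) (ht : 0 < t) (e : ℕ) :
    (∃ c' ∈ Rcirc R, ∀ n > 0, ∀ k < e,
        ∀ x ∈ a ^ ⌈t * ((p : ℝ) ^ (n * e + k) - 1)⌉₊,
          c' * x ∈ frobPow (a ^ ⌈t * ((p : ℝ) ^ (n * e) - 1)⌉₊) (p ^ k)) ∧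
    (∀ c' ∈ a ^ ((l + 1) * p ^ e), c' ∈ Rcirc R → ∀ n > 0, ∀ k < e,
        ∀ x ∈ a ^ ⌈t * ((p : ℝ) ^ (n * e + k) - 1)⌉₊,
          c' * x ∈ frobPow (a ^ ⌈t * ((p : ℝ) ^ (n * e) - 1)⌉₊) (p ^ k)) := by
  subst hgen
  have hmul : ∀ c' ∈ Ideal.span (Set.range f) ^ ((l + 1) * p ^ e), ∀ n k, k < e →
      ∀ x ∈ Ideal.span (Set.range f) ^ ⌈t * ((p : ℝ) ^ (n * e + k) - 1)⌉₊,
        c' * x ∈ frobPow (Ideal.span (Set.range f) ^ ⌈t * ((p : ℝ) ^ (n * e) - 1)⌉₊) (p ^ k) :=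
    fun c' hc' _ _ hk _ hx => mul_mem_frobPow_span_range_pow_natCeil f hp.pos ht.le hk.le
      (by rwa [Fintype.card_fin]) hx
  obtain ⟨x₀, hx₀a, hx₀⟩ := hcirc
  exact ⟨⟨x₀ ^ ((l + 1) * p ^ e), pow_mem_Rcirc hx₀ _,
    fun n _ => hmul _ (Ideal.pow_mem_pow hx₀a _) n⟩, fun c' hc' _ n _ => hmul c' hc' n⟩

theorem stmt2 (R : Type*) [CommRing R] [IsReduced R]
    (p : ℕ) (hp : p.Prime) [CharP R p]
    (l : ℕ) (a : Ideal R) (f : Fin l → R) (hgen : a = Ideal.span (Set.range f))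
    (hcirc : ∃ x ∈ a, x ∈ Rcirc R)
    (t : ℝ) (ht : 0 < t) (e : ℕ) (he : 0 < e) :
    (∃ c' ∈ Rcirc R, ∀ n > 0, ∀ k < e,
        ∀ x ∈ a ^ ⌈t * ((p : ℝ) ^ (n * e + k) - 1)⌉₊,
          c' * x ∈ frobPow (a ^ ⌈t * ((p : ℝ) ^ (n * e) - 1)⌉₊) (p ^ k)) ∧
    (∀ c' ∈ a ^ ((l + 1) * p ^ e), c' ∈ Rcirc R → ∀ n > 0, ∀ k < e,
        ∀ x ∈ a ^ ⌈t * ((p : ℝ) ^ (n * e + k) - 1)⌉₊,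
          c' * x ∈ frobPow (a ^ ⌈t * ((p : ℝ) ^ (n * e) - 1)⌉₊) (p ^ k)) :=
  stmt2_general R p hp l a f hgen hcirc t ht e
end

section
/- Let R be a commutative ring of prime characteristic p, let 𝔞 be an ideal, t > 0 a real number, e > 0 an integer, and γ : R → R a p^(−e)-linear map. Define γ_n to be the n-fold composite γ ∘ γ ∘ ⋯ ∘ γ (n times), which is a p^(−ne)-linear map. If b ∈ γ(𝔞^⌈t(p^e − 1)⌉), then b² ∈ γ_n(𝔞^⌈t(p^(ne) − 1)⌉) for all n ≥ 1. -/
theorem stmt6 (R : Type*) [CommRing R] (p : ℕ) (hp : p.Prime) [CharP R p]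
    (e : ℕ) (he : 0 < e) (a : Ideal R) (t : ℝ) (ht : 0 < t)
    (γ : R → R)
    (hadd : ∀ x y, γ (x + y) = γ x + γ y)
    (hsemi : ∀ r x, γ (r ^ p ^ e * x) = r * γ x)
    (b : R)
    (hb : ∃ x ∈ a ^ ⌈t * ((p : ℝ) ^ e - 1)⌉₊, γ x = b) :
    ∀ n ≥ 1, ∃ x ∈ a ^ ⌈t * ((p : ℝ) ^ (n * e) - 1)⌉₊, γ^[n] x = b ^ 2 := by
  obtain ⟨x, hx, hγx⟩ := hb
  have hpe2 : 2 ≤ p ^ e := Nat.one_lt_pow he.ne' hp.one_lt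
  -- strengthened induction
  have key : ∀ n, 1 ≤ n → ∃ u ∈ a ^ ⌈t * ((p : ℝ) ^ (n * e) - 1)⌉₊, ∃ k, 2 ≤ k ∧
      γ^[n] (u * b ^ k) = b ^ 2 := by
    intro n hn
    induction n, hn using Nat.le_induction with
    | base =>
      refine ⟨x, by simpa using hx, p ^ e, hpe2, ?_⟩
      have : x * b ^ p ^ e = b ^ p ^ e * x := by ring
      rw [Function.iterate_one, this, hsemi, hγx, sq]
    | succ n hn ih =>
      obtain ⟨u, hu, k, hk, hγu⟩ := ih
      -- ceiling inequality
      have hceil : ⌈t * ((p : ℝ) ^ ((n + 1) * e) - 1)⌉₊ ≤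
          p ^ e * ⌈t * ((p : ℝ) ^ (n * e) - 1)⌉₊ + ⌈t * ((p : ℝ) ^ e - 1)⌉₊ := by
        rw [Nat.ceil_le, add_mul, one_mul, pow_add]
        push_cast
        have h1 : t * ((p : ℝ) ^ (n * e) - 1) ≤ ⌈t * ((p : ℝ) ^ (n * e) - 1)⌉₊ :=
          Nat.le_ceil _
        have h2 : t * ((p : ℝ) ^ e - 1) ≤ ⌈t * ((p : ℝ) ^ e - 1)⌉₊ := Nat.le_ceil _
        have hpow : (0 : ℝ) ≤ (p : ℝ) ^ e := by positivity
        nlinarith [mul_le_mul_of_nonneg_left h1 hpow]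
      obtain ⟨m, rfl⟩ := Nat.exists_eq_add_of_le hk
      refine ⟨u ^ p ^ e * x * b ^ (m * p ^ e), ?_, p ^ e, hpe2, ?_⟩
      · apply Ideal.mul_mem_right
        have h1 : u ^ p ^ e ∈ a ^ (p ^ e * ⌈t * ((p : ℝ) ^ (n * e) - 1)⌉₊) := by
          rw [mul_comm, pow_mul]
          exact Ideal.pow_mem_pow hu _
        have h2 : u ^ p ^ e * x ∈
            a ^ (p ^ e * ⌈t * ((p : ℝ) ^ (n * e) - 1)⌉₊ + ⌈t * ((p : ℝ) ^ e - 1)⌉₊) := by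
          rw [pow_add]
          exact Ideal.mul_mem_mul h1 hx
        exact Ideal.pow_le_pow_right hceil h2
      · have step : γ (u ^ p ^ e * x * b ^ (m * p ^ e) * b ^ p ^ e)
            = u * b ^ (2 + m) := by
          have harr : u ^ p ^ e * x * b ^ (m * p ^ e) * b ^ p ^ e
              = (u * b ^ (m + 1)) ^ p ^ e * x := by
            rw [mul_pow, ← pow_mul]
            ring
          rw [harr, hsemi, hγx]
          ring
        rw [Function.iterate_succ_apply, step, hγu]
  intro n hn
  obtain ⟨u, hu, k, hk, hγu⟩ := key n hn
  exact ⟨u * b ^ k, Ideal.mul_mem_right _ _ hu, hγu⟩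
end

section
/- Let R be a commutative ring of prime characteristic p, fix e > 0 and a p^(−e)-linear map φ : R → R. Then: (1) if I and J are ideals with φ(I) ⊆ I and φ(J) ⊆ J, then φ(I ∩ J) ⊆ I ∩ J and φ(I + J) ⊆ I + J; (2) if φ(I) ⊆ I then φ(√I) ⊆ √I, where √I is the radical of I. -/
/-- Ideals compatible with a fixed `p^{-e}`-linear map `φ` are closed under
intersection, sum, and radical. -/
theorem stmt8 (R : Type*) [CommRing R] (p : ℕ) (hp : p.Prime) [CharP R p]
    (e : ℕ) (he : 0 < e) (φ : R → R)
    (hadd : ∀ x y, φ (x + y) = φ x + φ y)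
    (hsemi : ∀ r x, φ (r ^ p ^ e * x) = r * φ x) :
    (∀ I J : Ideal R, (∀ x ∈ I, φ x ∈ I) → (∀ x ∈ J, φ x ∈ J) →
      (∀ x ∈ I ⊓ J, φ x ∈ I ⊓ J) ∧ (∀ x ∈ I ⊔ J, φ x ∈ I ⊔ J)) ∧
    (∀ I : Ideal R, (∀ x ∈ I, φ x ∈ I) → ∀ x ∈ I.radical, φ x ∈ I.radical) := by
  obtain ⟨k, hk⟩ : ∃ k, p ^ e = k + 1 :=
    ⟨p ^ e - 1, by have := Nat.one_le_pow e p hp.pos; omega⟩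
  constructor
  · intro I J hI hJ
    constructor
    · intro x hx
      exact ⟨hI x hx.1, hJ x hx.2⟩
    · intro x hx
      rw [Submodule.mem_sup] at hx ⊢
      obtain ⟨a, ha, b, hb, rfl⟩ := hx
      exact ⟨φ a, hI a ha, φ b, hJ b hb, (hadd a b).symm⟩
  · intro I hI x hx
    obtain ⟨n, hn⟩ := hx
    -- descent: if x^A * (φ x)^B ∈ I then some power of φ x is in I
    have key : ∀ A B : ℕ, x ^ A * (φ x) ^ B ∈ I → ∃ C, (φ x) ^ C ∈ I := by
      intro A
      induction A with
      | zero =>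
          intro B h
          exact ⟨B, by simpa using h⟩
      | succ A ih =>
          intro B h
          have h2 : (x ^ A * (φ x) ^ B) ^ (p ^ e) * x ∈ I := by
            have heq : (x ^ A * (φ x) ^ B) ^ (p ^ e) * x
                = (x ^ A * (φ x) ^ B) ^ k * (x ^ (A + 1) * (φ x) ^ B) := by
              rw [hk]; ring
            rw [heq]
            exact Ideal.mul_mem_left I _ h
          have h3 := hI _ h2
          rw [hsemi (x ^ A * (φ x) ^ B) x] at h3
          have heq2 : x ^ A * (φ x) ^ B * φ x = x ^ A * (φ x) ^ (B + 1) := by ring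
            
          rw [heq2] at h3
          exact ih (B + 1) h3
    obtain ⟨C, hC⟩ := key n 0 (by simpa using hn)
    exact ⟨C, hC⟩
end

section
/- Let R be a commutative ring of prime characteristic p and φ : R → R a p^(−e)-linear map. If I is a radical ideal with φ(I) ⊆ I and P is a minimal prime of I, then φ(P) ⊆ P. -/
/-!
Localizing at `P`, the ideal `I R_P` has radical `P R_P` because `P` is minimal over `I`; since
`I` is radical this gives, for every `x ∈ P`, some `s ∉ P` with `s * x ∈ I`. Then
`s ^ q * x ∈ I`, so `s * φ x = φ (s ^ q * x) ∈ I ⊆ P`, and primality of `P` forces `φ x ∈ P`.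
-/

namespace Ideal

variable {R : Type*} [CommSemiring R] {I P : Ideal R}

theorem exists_notMem_mul_pow_mem_of_mem_minimalPrimes (hP : P ∈ I.minimalPrimes) {x : R}
    (hx : x ∈ P) : ∃ s ∉ P, ∃ n : ℕ, s * x ^ n ∈ I := by
  have := hP.isPrime
  obtain ⟨n, hn⟩ : algebraMap R (Localization.AtPrime P) x ∈ (I.map (algebraMap R _)).radical := by
    rw [IsLocalization.AtPrime.radical_map_of_mem_minimalPrimes _ P I hP]
    exact mem_map_of_mem _ hx
  rw [← map_pow, IsLocalization.algebraMap_mem_map_algebraMap_iff P.primeCompl] at hn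
  obtain ⟨s, hs, hsx⟩ := hn
  exact ⟨s, hs, n, hsx⟩

theorem IsRadical.exists_notMem_mul_mem_of_mem_minimalPrimes (hI : I.IsRadical)
    (hP : P ∈ I.minimalPrimes) {x : R} (hx : x ∈ P) : ∃ s ∉ P, s * x ∈ I := by
  obtain ⟨s, hs, n, hsx⟩ := exists_notMem_mul_pow_mem_of_mem_minimalPrimes hP hx
  refine ⟨s, hs, hI ⟨n + 1, ?_⟩⟩
  rw [show (s * x) ^ (n + 1) = s ^ n * x * (s * x ^ n) by ring]
  exact I.mul_mem_left _ hsx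

theorem IsRadical.apply_mem_of_mem_minimalPrimes {q : ℕ} (hq : q ≠ 0) {φ : R → R}
    (hφ : ∀ r x, φ (r ^ q * x) = r * φ x) (hI : I.IsRadical) (hφI : ∀ x ∈ I, φ x ∈ I)
    (hP : P ∈ I.minimalPrimes) {x : R} (hx : x ∈ P) : φ x ∈ P := by
  obtain ⟨s, hs, hsx⟩ := hI.exists_notMem_mul_mem_of_mem_minimalPrimes hP hx
  have hpow : s ^ q * x ∈ I := by
    rw [← Nat.succ_pred_eq_of_ne_zero hq, pow_succ, mul_assoc]
    exact I.mul_mem_left _ hsx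
  have hsφ : s * φ x ∈ P := hφ s x ▸ hP.1.2 (hφI _ hpow)
  exact (hP.isPrime.mem_or_mem hsφ).resolve_left hs

end Ideal

theorem stmt9_general (R : Type*) [CommRing R]
    (p : ℕ) (hp : p.Prime)
    (e : ℕ) (φ : R → R)
    (hsemi : ∀ r x, φ (r ^ p ^ e * x) = r * φ x)
    (I : Ideal R) (hrad : I.IsRadical) (hI : ∀ x ∈ I, φ x ∈ I)
    (P : Ideal R) (hP : P ∈ I.minimalPrimes) :
    ∀ x ∈ P, φ x ∈ P :=
  fun _ hx ↦ hrad.apply_mem_of_mem_minimalPrimes (pow_ne_zero e hp.ne_zero) hsemi hI hP hx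

/-- Minimal primes of a radical ideal compatible with a `p^{-e}`-linear map `φ`
are again compatible with `φ`. -/
theorem stmt9 (R : Type*) [CommRing R] [IsNoetherianRing R]
    (p : ℕ) (hp : p.Prime) [CharP R p]
    (e : ℕ) (he : 0 < e) (φ : R → R)
    (hadd : ∀ x y, φ (x + y) = φ x + φ y)
    (hsemi : ∀ r x, φ (r ^ p ^ e * x) = r * φ x)
    (I : Ideal R) (hrad : I.IsRadical) (hI : ∀ x ∈ I, φ x ∈ I)
    (P : Ideal R) (hP : P ∈ I.minimalPrimes) :
    ∀ x ∈ P, φ x ∈ P :=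
  stmt9_general R p hp e φ hsemi I hrad hI P hP
end

section
/- Let R be a commutative ring of prime characteristic p and φ a p^(−e)-linear map on R with φ composed with itself n−1 times denoted φ_n (a p^(−ne)-linear map). Suppose d ∈ R satisfies 1 ∈ φ_{n₀}(dR) for some n₀ > 0. Then 1 ∈ φ_n(R) for all n ≥ 1, and consequently 1 ∈ φ_n(dR) for all n ≥ n₀. -/
theorem stmt13 (R : Type*) [CommRing R] (p : ℕ) (hp : p.Prime) [CharP R p]
    (e : ℕ) (he : 0 < e) (φ : R → R)
    (hadd : ∀ x y, φ (x + y) = φ x + φ y)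
    (hsemi : ∀ r x, φ (r ^ p ^ e * x) = r * φ x)
    (d : R) (n₀ : ℕ) (hn₀ : 0 < n₀)
    (h1 : ∃ a : R, φ^[n₀] (d * a) = 1) :
    (∀ n ≥ 1, ∃ x : R, φ^[n] x = 1) ∧
    (∀ n ≥ n₀, ∃ a : R, φ^[n] (d * a) = 1) := by
  obtain ⟨a, ha⟩ := h1
  have key : ∀ m (r x : R), φ^[m] (r ^ p ^ (m * e) * x) = r * φ^[m] x := by
    intro m
    induction m with
    | zero => intro r x; simp
    | succ m ih =>
      intro r x
      rw [Function.iterate_succ_apply, Function.iterate_succ_apply]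
      have h : r ^ p ^ ((m + 1) * e) = (r ^ p ^ (m * e)) ^ p ^ e := by
        rw [← pow_mul, ← pow_add, Nat.succ_mul]
      rw [h, hsemi, ih]
  obtain ⟨m, hm⟩ : ∃ m, n₀ = m + 1 := ⟨n₀ - 1, (Nat.succ_pred_eq_of_pos hn₀).symm⟩
  have hc : φ (φ^[m] (d * a)) = 1 := by
    have h2 : φ^[m + 1] (d * a) = 1 := hm ▸ ha
    rwa [Function.iterate_succ_apply'] at h2
  have hφsurj : Function.Surjective φ := fun r =>
    ⟨r ^ p ^ e * φ^[m] (d * a), by rw [hsemi, hc, mul_one]⟩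
  have hiter : ∀ n, Function.Surjective (φ^[n]) := fun n =>
    Function.Surjective.iterate hφsurj n
  constructor
  · intro n _; exact hiter n 1
  · intro n hn
    obtain ⟨k, hk⟩ := Nat.exists_eq_add_of_le hn
    obtain ⟨s, hs⟩ := hiter k 1
    refine ⟨s ^ p ^ (n₀ * e) * a, ?_⟩
    have hk' : n = k + n₀ := by omega
    rw [hk', Function.iterate_add_apply]
    have : d * (s ^ p ^ (n₀ * e) * a) = s ^ p ^ (n₀ * e) * (d * a) := by ring
    rw [this, key, ha, mul_one, hs]
end

section
/- Let R be a Noetherian commutative ring of prime characteristic p, e > 0, φ a p^(−e)-linear map on R with n-fold composites φ_n, 𝔞 an ideal, t > 0, and b ∈ R an element, and define τ̃ = Σ_{n ≥ 0} φ_n(b · 𝔞^⌈t(p^(ne) − 1)⌉) (with φ_0 = id). Then: (1) the sum stabilizes to a finitely generated ideal; (2) b ∈ τ̃; (3) φ_m(𝔞^⌈t(p^(me) − 1)⌉ · τ̃) ⊆ τ̃ for all m ≥ 0. -/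
/-- The `n`-th summand `φ_n(b · 𝔞^⌈t(p^{ne}-1)⌉)` of the ideal `τ̃`. -/
def tauSummand {R : Type*} [CommRing R] (p e : ℕ) (φ : R → R) (a : Ideal R)
    (t : ℝ) (b : R) (n : ℕ) : Ideal R :=
  Ideal.span (φ^[n] ''
    {x | ∃ c ∈ (a ^ ⌈t * ((p : ℝ) ^ (n * e) - 1)⌉₊ : Ideal R), x = b * c})

section Aux

variable {R : Type*} [CommRing R] (p e : ℕ) (φ : R → R)

private lemma phi_zero (hadd : ∀ x y, φ (x + y) = φ x + φ y) : φ 0 = 0 := by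
  have h := hadd 0 0
  simp only [add_zero] at h
  exact (left_eq_add.mp h)

private lemma iter_zero (hadd : ∀ x y, φ (x + y) = φ x + φ y) (n : ℕ) :
    φ^[n] 0 = 0 := by
  induction n with
  | zero => simp
  | succ n ih => rw [Function.iterate_succ_apply, phi_zero φ hadd, ih]

private lemma iter_add (hadd : ∀ x y, φ (x + y) = φ x + φ y) (n : ℕ) (x y : R) :
    φ^[n] (x + y) = φ^[n] x + φ^[n] y := by
  induction n generalizing x y with
  | zero => simp
  | succ n ih =>
    simp only [Function.iterate_succ_apply]
    rw [hadd, ih]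

private lemma iter_semi (hsemi : ∀ r x, φ (r ^ p ^ e * x) = r * φ x)
    (n : ℕ) (r x : R) : φ^[n] (r ^ p ^ (n * e) * x) = r * φ^[n] x := by
  induction n generalizing r x with
  | zero => simp
  | succ n ih =>
    have hexp : r ^ p ^ ((n + 1) * e) = (r ^ p ^ e) ^ p ^ (n * e) := by
      rw [← pow_mul, ← pow_add]
      ring_nf
    rw [Function.iterate_succ_apply', hexp, ih, hsemi, Function.iterate_succ_apply']

private lemma tauSummand_mem (a : Ideal R) (t : ℝ) (b : R)
    (hadd : ∀ x y, φ (x + y) = φ x + φ y)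
    (hsemi : ∀ r x, φ (r ^ p ^ e * x) = r * φ x) (n : ℕ) :
    ∀ x ∈ tauSummand p e φ a t b n,
      ∃ c ∈ (a ^ ⌈t * ((p : ℝ) ^ (n * e) - 1)⌉₊ : Ideal R), x = φ^[n] (b * c) := by
  intro x hx
  refine Submodule.span_induction ?_ ?_ ?_ ?_ hx
  · rintro y ⟨z, ⟨c, hc, rfl⟩, rfl⟩
    exact ⟨c, hc, rfl⟩
  · exact ⟨0, zero_mem _, by rw [mul_zero, iter_zero φ hadd]⟩
  · rintro x y _ _ ⟨c, hc, rfl⟩ ⟨d, hd, rfl⟩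
    exact ⟨c + d, add_mem hc hd, by rw [mul_add, iter_add φ hadd]⟩
  · rintro r x _ ⟨c, hc, rfl⟩
    refine ⟨r ^ p ^ (n * e) * c, Ideal.mul_mem_left _ _ hc, ?_⟩
    rw [smul_eq_mul, ← iter_semi p e φ hsemi n r (b * c)]
    ring_nf

end Aux

theorem stmt14 (R : Type*) [CommRing R] [IsNoetherianRing R]
    (p : ℕ) (hp : p.Prime) [CharP R p]
    (e : ℕ) (he : 0 < e) (φ : R → R)
    (hadd : ∀ x y, φ (x + y) = φ x + φ y)
    (hsemi : ∀ r x, φ (r ^ p ^ e * x) = r * φ x)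
    (a : Ideal R) (t : ℝ) (ht : 0 < t) (b : R) :
    (∃ N : ℕ, (⨆ n, tauSummand p e φ a t b n) =
        ⨆ n ∈ Finset.range N, tauSummand p e φ a t b n) ∧
    (⨆ n, tauSummand p e φ a t b n).FG ∧
    b ∈ ⨆ n, tauSummand p e φ a t b n ∧
    (∀ m : ℕ, ∀ c ∈ (a ^ ⌈t * ((p : ℝ) ^ (m * e) - 1)⌉₊ : Ideal R),
      ∀ x ∈ ⨆ n, tauSummand p e φ a t b n,
        φ^[m] (c * x) ∈ ⨆ n, tauSummand p e φ a t b n) := by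
  set I : ℕ → Ideal R := tauSummand p e φ a t b with hI
  --stabilization
  have hmono : Monotone (fun N => ⨆ n ∈ Finset.range N, I n) := by
    intro i j hij
    exact biSup_mono (fun n hn => Finset.mem_range.mpr
      (lt_of_lt_of_le (Finset.mem_range.mp hn) hij))
  obtain ⟨N, hN⟩ := (monotone_stabilizes_iff_noetherian.mpr inferInstance)
    ⟨fun N => ⨆ n ∈ Finset.range N, I n, hmono⟩
  have hstab : (⨆ n, I n) = ⨆ n ∈ Finset.range N, I n := by
    apply le_antisymm
    · refine iSup_le fun n => ?_
      have h1 : I n ≤ ⨆ k ∈ Finset.range (n + 1), I k :=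
        le_biSup I (Finset.mem_range.mpr (Nat.lt_succ_self n))
      have h2 : (⨆ k ∈ Finset.range (n + 1), I k) ≤ ⨆ k ∈ Finset.range (max N (n + 1)), I k :=
        hmono (le_max_right _ _)
      have h3 := hN (max N (n + 1)) (le_max_left _ _)
      exact h1.trans (h2.trans_eq h3.symm)
    · exact iSup₂_le fun n _ => le_iSup I n
  refine ⟨⟨N, hstab⟩, IsNoetherian.noetherian _, ?_, ?_⟩
  · -- b ∈ τ̃
    have hb : b ∈ I 0 := by
      apply Ideal.subset_span
      exact ⟨b, ⟨1, by simp, (mul_one b).symm⟩, rfl⟩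
    exact (le_iSup I 0) hb
  · -- closure property
    intro m c hc x hx
    refine Submodule.iSup_induction (motive := fun x => φ^[m] (c * x) ∈ ⨆ n, I n) I hx ?_ ?_ ?_
    · intro n x hxn
      obtain ⟨d, hd, rfl⟩ := tauSummand_mem p e φ a t b hadd hsemi n x hxn
      have key : c * φ^[n] (b * d) = φ^[n] (b * (c ^ p ^ (n * e) * d)) := by
        rw [show b * (c ^ p ^ (n * e) * d) = c ^ p ^ (n * e) * (b * d) by ring,
          iter_semi p e φ hsemi]
      rw [key, ← Function.iterate_add_apply]
      have hmem : c ^ p ^ (n * e) * d ∈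
          (a ^ ⌈t * ((p : ℝ) ^ ((m + n) * e) - 1)⌉₊ : Ideal R) := by
        have h1 : c ^ p ^ (n * e) ∈
            ((a ^ ⌈t * ((p : ℝ) ^ (m * e) - 1)⌉₊) ^ p ^ (n * e) : Ideal R) :=
          Ideal.pow_mem_pow hc _
        rw [← pow_mul] at h1
        have h2 : c ^ p ^ (n * e) * d ∈
            (a ^ (⌈t * ((p : ℝ) ^ (m * e) - 1)⌉₊ * p ^ (n * e) +
              ⌈t * ((p : ℝ) ^ (n * e) - 1)⌉₊) : Ideal R) := by
          rw [pow_add]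
          exact Ideal.mul_mem_mul h1 hd
        refine Ideal.pow_le_pow_right ?_ h2
        rw [Nat.ceil_le]
        have hp1 : (1 : ℝ) ≤ (p : ℝ) ^ (n * e) :=
          by exact_mod_cast Nat.one_le_pow _ _ hp.pos
        have hk1 : t * ((p : ℝ) ^ (m * e) - 1) ≤ ⌈t * ((p : ℝ) ^ (m * e) - 1)⌉₊ :=
          Nat.le_ceil _
        have hk2 : t * ((p : ℝ) ^ (n * e) - 1) ≤ ⌈t * ((p : ℝ) ^ (n * e) - 1)⌉₊ :=
          Nat.le_ceil _
        have hsplit : (p : ℝ) ^ ((m + n) * e) = (p : ℝ) ^ (m * e) * (p : ℝ) ^ (n * e) := by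
          rw [← pow_add, add_mul]
        push_cast
        rw [hsplit]
        nlinarith [mul_le_mul_of_nonneg_right hk1 (le_trans zero_le_one hp1)]
      have : φ^[m + n] (b * (c ^ p ^ (n * e) * d)) ∈ I (m + n) := by
        apply Ideal.subset_span
        exact ⟨b * (c ^ p ^ (n * e) * d), ⟨_, hmem, rfl⟩, rfl⟩
      exact (le_iSup I (m + n)) this
    · show φ^[m] (c * 0) ∈ ⨆ n, I n
      rw [mul_zero, iter_zero φ hadd]
      exact zero_mem _
    · intro x y hx hy
      show φ^[m] (c * (x + y)) ∈ ⨆ n, I n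
      rw [mul_add, iter_add φ hadd]
      exact add_mem hx hy
end
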